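/- Fix K > 1 and let β = 4K²/(1+K²)². Then for all x ≥ 1, max( x²/(βK²) − 1 , −a·x² + 2x − 1 ) ≥ 0, where a = 1 + 1/K² − 1/(βK²). -/
import Mathlib


/-- For `K > 1`, `β = 4K²/(1+K²)²` and `a = 1 + 1/K² − 1/(βK²)`,
for all `x ≥ 1` we have `max(x²/(βK²) − 1, −a·x² + 2x − 1) ≥ 0`. -/
theorem key_algebraic_ineq (K : ℝ) (hK : 1 < K) (β a : ℝ)
    (hβ : β = 4 * K ^ 2 / (1 + K ^ 2) ^ 2)
    (ha : a = 1 + 1 / K ^ 2 - 1 / (β * K ^ 2)) :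
    ∀ x : ℝ, 1 ≤ x → 0 ≤ max (x ^ 2 / (β * K ^ 2) - 1) (-a * x ^ 2 + 2 * x - 1) := by
  intro x hx
  have hK0 : (0:ℝ) < K := lt_trans one_pos hK
  have hK2 : (1:ℝ) < K ^ 2 := by nlinarith
  have hden : (0:ℝ) < (1 + K ^ 2) ^ 2 := by positivity
  have hβK : β * K ^ 2 = 4 * K ^ 4 / (1 + K ^ 2) ^ 2 := by
    rw [hβ]; field_simp
  have hβKpos : 0 < β * K ^ 2 := by rw [hβK]; positivity
  have ha' : a = (3 * K ^ 2 - 1) * (K ^ 2 + 1) / (4 * K ^ 4) := by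
    rw [ha, hβK]
    field_simp
    ring
  rcases le_or_gt x (2 * K ^ 2 / (1 + K ^ 2)) with h | h
  · -- right branch: the concave quadratic is nonnegative on [1, t]
    refine le_max_of_le_right ?_
    have hr : 2 * K ^ 2 / (3 * K ^ 2 - 1) ≤ 1 := by
      rw [div_le_one (by nlinarith)]
      nlinarith
    have hx2 : 2 * K ^ 2 / (3 * K ^ 2 - 1) ≤ x := le_trans hr hx
    have h1 : 0 ≤ x * (3 * K ^ 2 - 1) - 2 * K ^ 2 := by
      have := (div_le_iff₀ (by nlinarith : (0:ℝ) < 3 * K ^ 2 - 1)).mp hx2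
      linarith
    have h2 : 0 ≤ 2 * K ^ 2 - x * (1 + K ^ 2) := by
      have := (le_div_iff₀ (by positivity : (0:ℝ) < 1 + K ^ 2)).mp h
      linarith
    rw [ha']
    have key : 0 ≤ (x * (3 * K ^ 2 - 1) - 2 * K ^ 2) * (2 * K ^ 2 - x * (1 + K ^ 2)) :=
      mul_nonneg h1 h2
    have hK4 : (0:ℝ) < 4 * K ^ 4 := by positivity
    rw [← mul_nonneg_iff_of_pos_right hK4]
    have expand : (-((3 * K ^ 2 - 1) * (K ^ 2 + 1) / (4 * K ^ 4)) * x ^ 2 + 2 * x - 1) * (4 * K ^ 4)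
        = (x * (3 * K ^ 2 - 1) - 2 * K ^ 2) * (2 * K ^ 2 - x * (1 + K ^ 2)) := by
      field_simp
      ring
    rw [expand]
    exact key
  · -- left branch: x ≥ t, so x² ≥ βK²
    refine le_max_of_le_left ?_
    have ht : (0:ℝ) < 2 * K ^ 2 / (1 + K ^ 2) := by positivity
    have hx2 : β * K ^ 2 ≤ x ^ 2 := by
      rw [hβK]
      have hxt := le_of_lt h
      rw [div_le_iff₀ (by positivity : (0:ℝ) < 1 + K ^ 2)] at hxt
      rw [div_le_iff₀ hden]
      nlinarith
    have : 1 ≤ x ^ 2 / (β * K ^ 2) := (one_le_div hβKpos).mpr hx2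
    linarith
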